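/- With the W_n-mapping construction (0 < γ_i ≤ γ < 1), the mapping W : C → C given by Wx = lim_{n→∞} W_n x is nonexpansive and satisfies F(W) = ⋂_{i=1}^∞ F(T_i). -/
import Mathlib


open scoped RealInnerProductSpace
open Filter

/-- `Uaux T g n m` is the Shimoji–Takahashi mapping `U_{n, n+1-m}`, so that
`Uaux T g n 0 = U_{n,n+1} = id` and `Uaux T g n n = U_{n,1} = W_n`. -/
def Uaux {H : Type*} [NormedAddCommGroup H] [InnerProductSpace ℝ H]
    (T : ℕ → H → H) (g : ℕ → ℝ) (n : ℕ) : ℕ → H → H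
  | 0 => id
  | (m + 1) => fun x => g (n - m) • T (n - m) (Uaux T g n m x) + (1 - g (n - m)) • x

/-- The `W_n`-mapping generated by `T₁, T₂, …` and `γ₁, γ₂, …`. -/
def Wmap {H : Type*} [NormedAddCommGroup H] [InnerProductSpace ℝ H]
    (T : ℕ → H → H) (g : ℕ → ℝ) (n : ℕ) : H → H :=
  Uaux T g n n

section helper

variable {H : Type*} [NormedAddCommGroup H] [InnerProductSpace ℝ H]
variable {C : Set H} {T : ℕ → H → H} {g : ℕ → ℝ}

lemma Uaux_succ (T : ℕ → H → H) (g : ℕ → ℝ) (n m : ℕ) (x : H) :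
    Uaux T g n (m + 1) x
      = g (n - m) • T (n - m) (Uaux T g n m x) + (1 - g (n - m)) • x := rfl

lemma Uaux_mem (hCcv : Convex ℝ C) (hTmaps : ∀ i ≥ 1, Set.MapsTo (T i) C C)
    (hg0 : ∀ i ≥ 1, 0 ≤ g i) (hg1 : ∀ i ≥ 1, g i ≤ 1) :
    ∀ m n : ℕ, m ≤ n → ∀ x ∈ C, Uaux T g n m x ∈ C := by
  intro m
  induction m with
  | zero => intro n _ x hx; exact hx
  | succ m ih =>
      intro n hmn x hx
      have h1 : 1 ≤ n - m := by omega
      rw [Uaux_succ]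
      exact hCcv (hTmaps _ h1 (ih n (by omega) x hx)) hx (hg0 _ h1)
        (by linarith [hg1 _ h1]) (by ring)

lemma Uaux_lip (hCcv : Convex ℝ C) (hTmaps : ∀ i ≥ 1, Set.MapsTo (T i) C C)
    (hTne : ∀ i ≥ 1, ∀ x ∈ C, ∀ y ∈ C, ‖T i x - T i y‖ ≤ ‖x - y‖)
    (hg0 : ∀ i ≥ 1, 0 ≤ g i) (hg1 : ∀ i ≥ 1, g i ≤ 1) :
    ∀ m n : ℕ, m ≤ n → ∀ x ∈ C, ∀ y ∈ C,
      ‖Uaux T g n m x - Uaux T g n m y‖ ≤ ‖x - y‖ := by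
  intro m
  induction m with
  | zero => intro n _ x _ y _; exact le_rfl
  | succ m ih =>
      intro n hmn x hx y hy
      have h1 : 1 ≤ n - m := by omega
      have hxm := Uaux_mem hCcv hTmaps hg0 hg1 m n (by omega) x hx
      have hym := Uaux_mem hCcv hTmaps hg0 hg1 m n (by omega) y hy
      rw [Uaux_succ, Uaux_succ]
      have hid : g (n - m) • T (n - m) (Uaux T g n m x) + (1 - g (n - m)) • x
          - (g (n - m) • T (n - m) (Uaux T g n m y) + (1 - g (n - m)) • y)
          = g (n - m) • (T (n - m) (Uaux T g n m x) - T (n - m) (Uaux T g n m y))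
            + (1 - g (n - m)) • (x - y) := by module
      rw [hid]
      calc ‖g (n - m) • (T (n - m) (Uaux T g n m x) - T (n - m) (Uaux T g n m y))
            + (1 - g (n - m)) • (x - y)‖
          ≤ ‖g (n - m) • (T (n - m) (Uaux T g n m x) - T (n - m) (Uaux T g n m y))‖
            + ‖(1 - g (n - m)) • (x - y)‖ := norm_add_le _ _
        _ = g (n - m) * ‖T (n - m) (Uaux T g n m x) - T (n - m) (Uaux T g n m y)‖
            + (1 - g (n - m)) * ‖x - y‖ := by
              rw [norm_smul, norm_smul, Real.norm_eq_abs, Real.norm_eq_abs,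
                abs_of_nonneg (hg0 _ h1), abs_of_nonneg (by linarith [hg1 _ h1])]
        _ ≤ g (n - m) * ‖x - y‖ + (1 - g (n - m)) * ‖x - y‖ := by
              have h2 := (hTne _ h1 _ hxm _ hym).trans (ih n (by omega) x hx y hy)
              have h3 := hg0 _ h1
              nlinarith [norm_nonneg (x - y)]
        _ = ‖x - y‖ := by ring

lemma Uaux_fix {p : H} (hpfix : ∀ i ≥ 1, T i p = p) :
    ∀ m n : ℕ, m ≤ n → Uaux T g n m p = p := by
  intro m
  induction m with
  | zero => intro n _; rfl
  | succ m ih =>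
      intro n hmn
      have h1 : 1 ≤ n - m := by omega
      rw [Uaux_succ, ih n (by omega), hpfix _ h1]
      module

lemma Uaux_fix_all {x : H} (hfix : ∀ i ≥ 1, T i x = x) :
    ∀ m n : ℕ, m ≤ n → Uaux T g n m x = x := by
  intro m
  induction m with
  | zero => intro n _; rfl
  | succ m ih =>
      intro n hmn
      have h1 : 1 ≤ n - m := by omega
      rw [Uaux_succ, ih n (by omega), hfix _ h1]
      module

lemma Uaux_diff (hCcv : Convex ℝ C) (hTmaps : ∀ i ≥ 1, Set.MapsTo (T i) C C)
    (hTne : ∀ i ≥ 1, ∀ x ∈ C, ∀ y ∈ C, ‖T i x - T i y‖ ≤ ‖x - y‖)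
    {γ : ℝ} (hγ0 : 0 ≤ γ) (hγ1 : γ ≤ 1)
    (hg : ∀ i ≥ 1, 0 ≤ g i ∧ g i ≤ γ)
    {p : H} (hpC : p ∈ C) (hpfix : ∀ i ≥ 1, T i p = p)
    {x : H} (hx : x ∈ C) :
    ∀ m n : ℕ, m ≤ n →
      ‖Uaux T g (n + 1) (m + 1) x - Uaux T g n m x‖ ≤ γ ^ (m + 1) * (2 * ‖x - p‖) := by
  have hg0 : ∀ i ≥ 1, 0 ≤ g i := fun i hi => (hg i hi).1
  have hg1 : ∀ i ≥ 1, g i ≤ 1 := fun i hi => le_trans (hg i hi).2 hγ1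
  intro m
  induction m with
  | zero =>
      intro n _
      have h1 : 1 ≤ n + 1 - 0 := by omega
      rw [Uaux_succ]
      have hid : g (n + 1 - 0) • T (n + 1 - 0) (Uaux T g (n + 1) 0 x) + (1 - g (n + 1 - 0)) • x
          - Uaux T g n 0 x = g (n + 1) • (T (n + 1) x - x) := by
        show g (n + 1 - 0) • T (n + 1 - 0) x + (1 - g (n + 1 - 0)) • x - x
          = g (n + 1) • (T (n + 1) x - x)
        norm_num
        module
      rw [hid, norm_smul, Real.norm_eq_abs, abs_of_nonneg (hg0 _ (by omega))]
      have hb : ‖T (n + 1) x - x‖ ≤ 2 * ‖x - p‖ := by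
        calc ‖T (n + 1) x - x‖ ≤ ‖T (n + 1) x - p‖ + ‖p - x‖ := by
              have := norm_add_le (T (n + 1) x - p) (p - x)
              simpa using this
          _ ≤ ‖x - p‖ + ‖p - x‖ := by
              have := hTne (n + 1) (by omega) x hx p hpC
              rw [hpfix (n + 1) (by omega)] at this
              linarith
          _ = 2 * ‖x - p‖ := by rw [norm_sub_rev p x]; ring
      calc g (n + 1) * ‖T (n + 1) x - x‖ ≤ γ * (2 * ‖x - p‖) := by
            have := (hg (n + 1) (by omega)).2
            have := hg0 (n + 1) (by omega)
            nlinarith [norm_nonneg (T (n + 1) x - x), norm_nonneg (x - p)]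
        _ = γ ^ (0 + 1) * (2 * ‖x - p‖) := by ring
  | succ m ih =>
      intro n hmn
      have h1 : 1 ≤ n - m := by omega
      have hA := Uaux_mem hCcv hTmaps hg0 hg1 (m + 1) (n + 1) (by omega) x hx
      have hB := Uaux_mem hCcv hTmaps hg0 hg1 m n (by omega) x hx
      rw [Uaux_succ T g (n + 1) (m + 1), Uaux_succ T g n m,
        show n + 1 - (m + 1) = n - m by omega]
      have hid : g (n - m) • T (n - m) (Uaux T g (n + 1) (m + 1) x) + (1 - g (n - m)) • x
          - (g (n - m) • T (n - m) (Uaux T g n m x) + (1 - g (n - m)) • x)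
          = g (n - m) • (T (n - m) (Uaux T g (n + 1) (m + 1) x) - T (n - m) (Uaux T g n m x)) := by
        module
      rw [hid, norm_smul, Real.norm_eq_abs, abs_of_nonneg (hg0 _ h1)]
      have h2 := (hTne _ h1 _ hA _ hB).trans (ih n (by omega))
      have h3 := (hg _ h1).2
      have h4 := hg0 _ h1
      calc g (n - m) * ‖T (n - m) (Uaux T g (n + 1) (m + 1) x) - T (n - m) (Uaux T g n m x)‖
          ≤ γ * (γ ^ (m + 1) * (2 * ‖x - p‖)) := by
            apply mul_le_mul h3 ((hTne _ h1 _ hA _ hB).trans (ih n (by omega)))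
              (norm_nonneg _) hγ0
        _ = γ ^ (m + 1 + 1) * (2 * ‖x - p‖) := by ring

lemma strict_conv {a b : H} {t : ℝ} (ht0 : 0 < t) (ht1 : t < 1)
    (hab : ‖a‖ ≤ ‖b‖) (h : ‖t • a + (1 - t) • b‖ = ‖b‖) : a = b := by
  have e1 : ‖t • a + (1 - t) • b‖ ^ 2
      = t ^ 2 * ‖a‖ ^ 2 + 2 * (t * ((1 - t) * ⟪a, b⟫)) + (1 - t) ^ 2 * ‖b‖ ^ 2 := by
    rw [norm_add_sq_real, norm_smul, norm_smul, real_inner_smul_left, real_inner_smul_right,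
      Real.norm_eq_abs, Real.norm_eq_abs, abs_of_pos ht0, abs_of_pos (by linarith : (0:ℝ) < 1 - t)]
    ring
  rw [h] at e1
  have hip : ⟪a, b⟫ ≤ ‖a‖ * ‖b‖ := real_inner_le_norm a b
  have hsq : ‖a - b‖ ^ 2 = ‖a‖ ^ 2 - 2 * ⟪a, b⟫ + ‖b‖ ^ 2 := norm_sub_sq_real a b
  have hna : 0 ≤ ‖a‖ := norm_nonneg a
  have hnb : 0 ≤ ‖b‖ := norm_nonneg b
  have hA2 : ‖a‖ ^ 2 ≤ ‖b‖ ^ 2 := by nlinarith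
  have htt : 0 < t * (1 - t) := mul_pos ht0 (by linarith)
  have hIB : ‖b‖ ^ 2 ≤ ⟪a, b⟫ := by nlinarith [mul_le_mul_of_nonneg_left hA2 (sq_nonneg t)]
  have hIA : ⟪a, b⟫ ≤ ‖b‖ ^ 2 := by nlinarith
  have h0 : ‖a - b‖ ^ 2 ≤ 0 := by nlinarith
  have : ‖a - b‖ = 0 := by nlinarith [norm_nonneg (a - b), sq_nonneg ‖a - b‖]
  exact sub_eq_zero.mp (norm_eq_zero.mp this)

lemma smul_combo_cancel {t : ℝ} (ht : t ≠ 0) {y x : H}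
    (h : x = t • y + (1 - t) • x) : y = x := by
  apply smul_right_injective H ht
  have h2 : x - (1 - t) • x = t • x := by module
  exact (eq_sub_of_add_eq h.symm).trans h2

end helper

theorem stmt_10 {H : Type*} [NormedAddCommGroup H] [InnerProductSpace ℝ H]
    [CompleteSpace H] (C : Set H) (hCne : C.Nonempty) (hCcl : IsClosed C)
    (hCcv : Convex ℝ C)
    (T : ℕ → H → H) (hTmaps : ∀ i ≥ 1, Set.MapsTo (T i) C C)
    (hTne : ∀ i ≥ 1, ∀ x ∈ C, ∀ y ∈ C, ‖T i x - T i y‖ ≤ ‖x - y‖)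
    (hF : ∃ p ∈ C, ∀ i ≥ 1, T i p = p)
    (g : ℕ → ℝ) (γ : ℝ) (hγ : γ < 1)
    (hg : ∀ i ≥ 1, 0 < g i ∧ g i ≤ γ)
    (W : H → H) (hW : ∀ x ∈ C, Tendsto (fun n => Wmap T g n x) atTop (nhds (W x))) :
    Set.MapsTo W C C ∧
    (∀ x ∈ C, ∀ y ∈ C, ‖W x - W y‖ ≤ ‖x - y‖) ∧
    {x ∈ C | W x = x} = {x ∈ C | ∀ i ≥ 1, T i x = x} := by
  obtain ⟨p, hpC, hpfix⟩ := hF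
  have hγ0 : 0 < γ := lt_of_lt_of_le (hg 1 le_rfl).1 (hg 1 le_rfl).2
  have hg0 : ∀ i ≥ 1, 0 ≤ g i := fun i hi => (hg i hi).1.le
  have hg1 : ∀ i ≥ 1, g i ≤ 1 := fun i hi => le_trans (hg i hi).2 hγ.le
  have hg' : ∀ i ≥ 1, 0 ≤ g i ∧ g i ≤ γ := fun i hi => ⟨(hg i hi).1.le, (hg i hi).2⟩
  -- Part 1
  have part1 : Set.MapsTo W C C := by
    intro x hx
    exact hCcl.mem_of_tendsto (hW x hx)
      (Eventually.of_forall fun n => Uaux_mem hCcv hTmaps hg0 hg1 n n le_rfl x hx)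
  -- Part 2
  have part2 : ∀ x ∈ C, ∀ y ∈ C, ‖W x - W y‖ ≤ ‖x - y‖ := by
    intro x hx y hy
    refine le_of_tendsto ((hW x hx).sub (hW y hy)).norm
      (Eventually.of_forall fun n => ?_)
    exact Uaux_lip hCcv hTmaps hTne hg0 hg1 n n le_rfl x hx y hy
  refine ⟨part1, part2, ?_⟩
  ext x
  simp only [Set.mem_setOf_eq]
  constructor
  · rintro ⟨hx, hWx⟩
    refine ⟨hx, ?_⟩
    -- the hard direction
    have key : ∀ k : ℕ, ∃ z : H,
        Tendsto (fun n => Uaux T g (n + k + 1) (n + 1) x) atTop (nhds z) := by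
      intro k
      apply cauchySeq_tendsto_of_complete
      apply cauchySeq_of_le_geometric γ (2 * ‖x - p‖ * γ ^ 2) hγ
      intro n
      have hd := Uaux_diff hCcv hTmaps hTne hγ0.le hγ.le hg' hpC hpfix hx
        (n + 1) (n + k + 1) (by omega)
      rw [dist_eq_norm, norm_sub_rev]
      show ‖Uaux T g (n + 1 + k + 1) (n + 1 + 1) x - Uaux T g (n + k + 1) (n + 1) x‖ ≤ _
      rw [show n + 1 + k + 1 = (n + k + 1) + 1 by omega]
      refine hd.trans (le_of_eq ?_)
      ring
    choose u hu using key
    have hsC : ∀ k n : ℕ, Uaux T g (n + k + 1) (n + 1) x ∈ C := fun k n =>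
      Uaux_mem hCcv hTmaps hg0 hg1 (n + 1) (n + k + 1) (by omega) x hx
    have huC : ∀ k, u k ∈ C := fun k =>
      hCcl.mem_of_tendsto (hu k) (Eventually.of_forall (hsC k))
    have hub : ∀ k, ‖u k - p‖ ≤ ‖x - p‖ := by
      intro k
      refine le_of_tendsto ((hu k).sub_const p).norm (Eventually.of_forall fun n => ?_)
      calc ‖Uaux T g (n + k + 1) (n + 1) x - p‖
          = ‖Uaux T g (n + k + 1) (n + 1) x - Uaux T g (n + k + 1) (n + 1) p‖ := by
            rw [Uaux_fix hpfix (n + 1) (n + k + 1) (by omega)]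
        _ ≤ ‖x - p‖ := Uaux_lip hCcv hTmaps hTne hg0 hg1 (n + 1) (n + k + 1)
            (by omega) x hx p hpC
    have hu0 : u 0 = x := by
      have hWlim : Tendsto (fun n : ℕ => Uaux T g (n + 0 + 1) (n + 1) x) atTop (nhds x) := by
        have h1 := (hW x hx).comp (tendsto_add_atTop_nat 1)
        rw [hWx] at h1
        exact h1.congr fun n => rfl
      exact tendsto_nhds_unique (hu 0) hWlim
    -- the recurrence
    have hrec : ∀ k : ℕ, u k = g (k + 1) • T (k + 1) (u (k + 1)) + (1 - g (k + 1)) • x := by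
      intro k
      have hseq : ∀ N : ℕ, Uaux T g (N + 1 + k + 1) (N + 1 + 1) x
          = g (k + 1) • T (k + 1) (Uaux T g (N + (k + 1) + 1) (N + 1) x)
            + (1 - g (k + 1)) • x := by
        intro N
        rw [Uaux_succ T g (N + 1 + k + 1) (N + 1),
          show N + 1 + k + 1 - (N + 1) = k + 1 by omega,
          show N + 1 + k + 1 = N + (k + 1) + 1 by omega]
      have hL : Tendsto (fun N : ℕ => Uaux T g (N + 1 + k + 1) (N + 1 + 1) x)
          atTop (nhds (u k)) := by
        have h1 := (hu k).comp (tendsto_add_atTop_nat 1)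
        refine h1.congr fun N => ?_
        show Uaux T g (N + 1 + k + 1) (N + 1 + 1) x = Uaux T g (N + 1 + k + 1) (N + 1 + 1) x
        rfl
      have hT : Tendsto (fun N : ℕ => T (k + 1) (Uaux T g (N + (k + 1) + 1) (N + 1) x))
          atTop (nhds (T (k + 1) (u (k + 1)))) := by
        rw [tendsto_iff_norm_sub_tendsto_zero]
        have h0 : Tendsto (fun N : ℕ => ‖Uaux T g (N + (k + 1) + 1) (N + 1) x - u (k + 1)‖)
            atTop (nhds 0) := by
          have := ((hu (k + 1)).sub_const (u (k + 1))).norm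
          simpa using this
        refine squeeze_zero (fun N => norm_nonneg _) (fun N => ?_) h0
        exact hTne (k + 1) (by omega) _ (hsC (k + 1) N) _ (huC (k + 1))
      have hR : Tendsto (fun N : ℕ => g (k + 1) • T (k + 1)
            (Uaux T g (N + (k + 1) + 1) (N + 1) x) + (1 - g (k + 1)) • x)
          atTop (nhds (g (k + 1) • T (k + 1) (u (k + 1)) + (1 - g (k + 1)) • x)) :=
        (hT.const_smul _).add tendsto_const_nhds
      exact tendsto_nhds_unique (hL.congr hseq) hR
    -- induction: all u k = x
    have hux : ∀ k, u k = x := by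
      intro k
      induction k with
      | zero => exact hu0
      | succ k ih =>
        have h := hrec k
        rw [ih] at h
        have hTk : T (k + 1) (u (k + 1)) = x :=
          smul_combo_cancel (ne_of_gt (hg (k + 1) (by omega)).1) h
        have hEq : ‖u (k + 1) - p‖ = ‖x - p‖ := by
          refine le_antisymm (hub (k + 1)) ?_
          have h2 := hTne (k + 1) (by omega) (u (k + 1)) (huC (k + 1)) p hpC
          rw [hTk, hpfix (k + 1) (by omega)] at h2
          exact h2
        have hab : ‖T (k + 1 + 1) (u (k + 1 + 1)) - p‖ ≤ ‖x - p‖ := by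
          have h2 := hTne (k + 1 + 1) (by omega) (u (k + 1 + 1)) (huC (k + 1 + 1)) p hpC
          rw [hpfix (k + 1 + 1) (by omega)] at h2
          exact h2.trans (hub (k + 1 + 1))
        have hcomb : u (k + 1) - p
            = g (k + 1 + 1) • (T (k + 1 + 1) (u (k + 1 + 1)) - p)
              + (1 - g (k + 1 + 1)) • (x - p) := by
          rw [hrec (k + 1)]; module
        have hnorm : ‖g (k + 1 + 1) • (T (k + 1 + 1) (u (k + 1 + 1)) - p)
            + (1 - g (k + 1 + 1)) • (x - p)‖ = ‖x - p‖ := by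
          rw [← hcomb]; exact hEq
        have hstrict := strict_conv (hg (k + 1 + 1) (by omega)).1
          (lt_of_le_of_lt (hg (k + 1 + 1) (by omega)).2 hγ) hab hnorm
        have hTx : T (k + 1 + 1) (u (k + 1 + 1)) = x := by
          have h3 : T (k + 1 + 1) (u (k + 1 + 1)) - p = x - p := hstrict
          have := congrArg (fun z => z + p) h3
          simpa using this
        rw [hrec (k + 1), hTx]
        module
    intro i hi
    obtain ⟨k, rfl⟩ : ∃ k, i = k + 1 := ⟨i - 1, by omega⟩
    have h := hrec k
    rw [hux k, hux (k + 1)] at h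
    exact smul_combo_cancel (ne_of_gt (hg (k + 1) (by omega)).1) h
  · rintro ⟨hx, hfix⟩
    refine ⟨hx, ?_⟩
    have hWlim : Tendsto (fun n => Wmap T g n x) atTop (nhds x) :=
      tendsto_const_nhds.congr fun n => (Uaux_fix_all hfix n n le_rfl).symm
    exact tendsto_nhds_unique (hW x hx) hWlim
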